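/- arXiv:1610.10016 — 5 statements merged into one kernel-verified Lean document; each statement's English description precedes it below -/
import Mathlib

section
/- Let f : [0,1] → ℝ be twice continuously differentiable with f(0) = f(1) = 0. Then sup_{y ∈ [0,1]} |f(y)| ≤ ∫₀¹ |f''(y)| dy. -/
/-!
By Rolle's theorem `f'` vanishes somewhere in `[0,1]`, and `f` vanishes at `0`. A function that
vanishes at a point of `[a,b]` is bounded on `[a,b]` by the `L¹` norm of its derivative there
(fundamental theorem of calculus), so `|f| ≤ ∫₀¹ |f'| ≤ sup_{[0,1]} |f'| ≤ ∫₀¹ |f''|`.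
-/

open Set MeasureTheory intervalIntegral
open scoped Interval

theorem abs_intervalIntegral_le_integral_abs_of_mem_Icc {g : ℝ → ℝ} {a b u v : ℝ}
    (hg : IntervalIntegrable g volume a b) (hu : u ∈ Icc a b) (hv : v ∈ Icc a b) :
    |∫ x in u..v, g x| ≤ ∫ x in a..b, |g x| := by
  have hab : a ≤ b := hu.1.trans hu.2
  have hsub : Ι u v ⊆ Ι a b := uIoc_subset_uIoc_of_uIcc_subset_uIcc <|
    uIcc_subset_uIcc (Icc_subset_uIcc hu) (Icc_subset_uIcc hv)
  calc |∫ x in u..v, g x|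
      _ ≤ |∫ x in u..v, (|g x|)| := by
        simpa only [Real.norm_eq_abs] using norm_integral_le_abs_integral_norm (f := g)
      _ ≤ |∫ x in a..b, (|g x|)| :=
        abs_integral_mono_interval hsub (.of_forall fun _ => abs_nonneg _) hg.abs
      _ = ∫ x in a..b, |g x| := abs_of_nonneg <| integral_nonneg hab fun _ _ => abs_nonneg _

theorem abs_le_integral_abs_deriv_of_eq_zero {g : ℝ → ℝ} {a b c t : ℝ}
    (hg : ∀ x ∈ Icc a b, DifferentiableAt ℝ g x) (hg' : IntervalIntegrable (deriv g) volume a b)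
    (hc : c ∈ Icc a b) (hgc : g c = 0) (ht : t ∈ Icc a b) :
    |g t| ≤ ∫ x in a..b, |deriv g x| := by
  have hsub : uIcc c t ⊆ Icc a b := uIcc_subset_Icc hc ht
  have hftc : ∫ x in c..t, deriv g x = g t := by
    rw [integral_deriv_eq_sub (fun x hx => hg x (hsub hx))
      (hg'.mono_set (hsub.trans Icc_subset_uIcc)), hgc, sub_zero]
  rw [← hftc]
  exact abs_intervalIntegral_le_integral_abs_of_mem_Icc hg' hc ht

/-- If `f ∈ C²([0,1])` (here: `C²` on `ℝ`) with `f 0 = f 1 = 0`, then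
`sup_{y ∈ [0,1]} |f y| ≤ ∫₀¹ |f''|`. -/
theorem stmt_0 (f : ℝ → ℝ) (hf : ContDiff ℝ 2 f) (h0 : f 0 = 0) (h1 : f 1 = 0) :
    ∀ y ∈ Set.Icc (0:ℝ) 1, |f y| ≤ ∫ s in (0:ℝ)..1, |deriv (deriv f) s| := by
  intro y hy
  have hf' : ContDiff ℝ 1 (deriv f) := hf.deriv'
  obtain ⟨c, hc, hfc⟩ :=
    exists_deriv_eq_zero zero_lt_one hf.continuous.continuousOn (h0.trans h1.symm)
  have hf'_le : ∀ t ∈ Icc (0:ℝ) 1, |deriv f t| ≤ ∫ s in (0:ℝ)..1, |deriv (deriv f) s| :=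
    fun t ht => abs_le_integral_abs_deriv_of_eq_zero
      (fun _ _ => (hf'.differentiable one_ne_zero).differentiableAt)
      ((hf'.continuous_deriv le_rfl).intervalIntegrable 0 1) (Ioo_subset_Icc_self hc) hfc ht
  calc |f y| ≤ ∫ s in (0:ℝ)..1, |deriv f s| :=
        abs_le_integral_abs_deriv_of_eq_zero
          (fun _ _ => (hf.differentiable two_ne_zero).differentiableAt)
          (hf'.continuous.intervalIntegrable 0 1) (left_mem_Icc.2 zero_le_one) h0 hy
    _ ≤ ∫ _ in (0:ℝ)..1, ∫ s in (0:ℝ)..1, |deriv (deriv f) s| :=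
        integral_mono_on zero_le_one (hf'.continuous.abs.intervalIntegrable 0 1)
          intervalIntegrable_const fun t ht => hf'_le t ht
    _ = ∫ s in (0:ℝ)..1, |deriv (deriv f) s| := by simp
end

section
/- Let X ∈ C²([0,1]) and q_i(0) = (1/N)X(i/N) − 1/N for i = 0,…,N with X(0) = X(1) = 1. Then the Fourier coefficients Q_j = √(2/N)·Σ_{i=1}^{N−1} q_i(0) sin(πij/N) satisfy |Q_j| ≤ (1/4)√(2/N)·α/j² for all j = 1,…,N−1, where α = ∫₀¹ |X''(y)| dy. -/
/-!
With `θ = π j / N`, the vector `v_i = sin (i θ)` vanishes at `i = 0, N` and satisfies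
`v_{i-1} - 2 v_i + v_{i+1} = -(2 - 2 cos θ) v_i`, so by the symmetry of the Dirichlet second
difference operator `(2 - 2 cos θ) Q_j` pairs the second differences of `q` with `v`. Those are
`1/N` times the second differences of `X` on the grid `i/N`, and Taylor's formula with integral
remainder writes each of these as `∫ K_i X''` with a hat-shaped kernel `K_i`; the kernels of all
the grid points add up to at most `1/N`, so the sum of their absolute values is at most `α / N`.
Finally `2 - 2 cos θ ≥ 4 θ² / π² = 4 j² / N²`.
-/

open Real Finset intervalIntegral

section SecondDifference

variable {X : ℝ → ℝ}

lemma ContDiff.contDiff_one_deriv (hX : ContDiff ℝ 2 X) : ContDiff ℝ 1 (deriv X) :=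
  ContDiff.deriv' (n := 1) hX

theorem ContDiff.sub_sub_mul_deriv_eq_integral (hX : ContDiff ℝ 2 X) (a b : ℝ) :
    X b - X a - (b - a) * deriv X a = ∫ s in a..b, (b - s) * deriv (deriv X) s := by
  have hX' := hX.contDiff_one_deriv
  rw [integral_eq_sub_of_hasDerivAt (f := fun s => (b - s) * deriv X s + X s)]
  · ring
  · intro s _
    have : HasDerivAt (fun s => (b - s) * deriv X s + X s)
        (-1 * deriv X s + (b - s) * deriv (deriv X) s + deriv X s) s :=
      (((hasDerivAt_id s).const_sub b).mul (hX'.differentiable one_ne_zero s).hasDerivAt).add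
        (hX.differentiable two_ne_zero s).hasDerivAt
    exact this.congr_deriv (by ring)
  · exact ((continuous_const.sub continuous_id).mul
      (hX'.continuous_deriv le_rfl)).intervalIntegrable _ _

lemma abs_integral_mul_le_integral_mul_abs {f g : ℝ → ℝ} {a b : ℝ} (hab : a ≤ b)
    (hf : ∀ s ∈ Set.Icc a b, 0 ≤ f s) :
    |∫ s in a..b, f s * g s| ≤ ∫ s in a..b, f s * |g s| :=
  calc _ ≤ ∫ s in a..b, |f s * g s| := abs_integral_le_integral_abs hab
    _ = _ := integral_congr fun s hs => by
        rw [Set.uIcc_of_le hab] at hs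
        simp only [abs_mul, abs_of_nonneg (hf s hs)]

theorem ContDiff.abs_second_diff_le (hX : ContDiff ℝ 2 X) {a b c : ℝ} (hab : a ≤ b)
    (hbc : b - a = c - b) :
    |X a - 2 * X b + X c| ≤ (∫ s in a..b, (s - a) * |deriv (deriv X) s|) +
      ∫ s in b..c, (c - s) * |deriv (deriv X) s| := by
  have hleft : X a - X b - (a - b) * deriv X b = ∫ s in a..b, (s - a) * deriv (deriv X) s := by
    rw [hX.sub_sub_mul_deriv_eq_integral, integral_symm, ← integral_neg]
    congr 1 with s
    ring
  have hright := hX.sub_sub_mul_deriv_eq_integral b c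
  rw [show X a - 2 * X b + X c = (∫ s in a..b, (s - a) * deriv (deriv X) s) +
      ∫ s in b..c, (c - s) * deriv (deriv X) s by
    linear_combination hleft + hright - deriv X b * hbc]
  exact (abs_add_le _ _).trans (add_le_add
    (abs_integral_mul_le_integral_mul_abs hab fun s hs => by linarith [hs.1])
    (abs_integral_mul_le_integral_mul_abs (by linarith) fun s hs => by linarith [hs.2]))

lemma integral_sub_left_mul_add_integral_sub_right_mul {g : ℝ → ℝ} (hg : Continuous g)
    (a b : ℝ) :
    (∫ s in a..b, (s - a) * g s) + ∫ s in a..b, (b - s) * g s = (b - a) * ∫ s in a..b, g s := by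
  rw [← integral_add ((by fun_prop : Continuous fun s => (s - a) * g s).intervalIntegrable _ _)
    ((by fun_prop : Continuous fun s => (b - s) * g s).intervalIntegrable _ _),
    ← integral_const_mul]
  congr 1 with s
  ring

theorem ContDiff.sum_abs_second_diff_le (hX : ContDiff ℝ 2 X) {x : ℕ → ℝ} {h : ℝ} (hh : 0 ≤ h)
    (hx : ∀ k, x (k + 1) = x k + h) (n : ℕ) :
    ∑ i ∈ range n, |X (x i) - 2 * X (x (i + 1)) + X (x (i + 2))| ≤
      h * ∫ s in x 0..x (n + 1), |deriv (deriv X) s| := by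
  have hg : Continuous fun s => |deriv (deriv X) s| :=
    (hX.contDiff_one_deriv.continuous_deriv le_rfl).abs
  set L : ℕ → ℝ := fun k => ∫ s in x k..x (k + 1), (s - x k) * |deriv (deriv X) s|
  set R : ℕ → ℝ := fun k => ∫ s in x k..x (k + 1), (x (k + 1) - s) * |deriv (deriv X) s|
  have hmono (k : ℕ) : x k ≤ x (k + 1) := by linarith [hx k]
  have hL (k : ℕ) : 0 ≤ L k :=
    integral_nonneg (hmono k) fun s hs => mul_nonneg (by linarith [hs.1]) (abs_nonneg _)
  have hR (k : ℕ) : 0 ≤ R k :=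
    integral_nonneg (hmono k) fun s hs => mul_nonneg (by linarith [hs.2]) (abs_nonneg _)
  calc _ ≤ ∑ i ∈ range n, (L i + R (i + 1)) :=
        sum_le_sum fun i _ => hX.abs_second_diff_le (hmono i) (by rw [hx (i + 1), hx i]; ring)
    _ ≤ ∑ k ∈ range (n + 1), (L k + R k) := by
        rw [sum_add_distrib, sum_add_distrib, sum_range_succ L, sum_range_succ' R]
        linarith [hL n, hR 0]
    _ = ∑ k ∈ range (n + 1), h * ∫ s in x k..x (k + 1), |deriv (deriv X) s| :=
        sum_congr rfl fun k _ => by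
          rw [integral_sub_left_mul_add_integral_sub_right_mul hg, hx k, add_sub_cancel_left]
    _ = _ := by
        rw [← mul_sum, sum_integral_adjacent_intervals fun k _ => hg.intervalIntegrable _ _]

theorem ContDiff.sum_abs_second_diff_div_le (hX : ContDiff ℝ 2 X) {N : ℕ} (hN : 0 < N) :
    ∑ i ∈ range (N - 1), |X (i / N) - 2 * X ((i + 1 : ℕ) / N) + X ((i + 2 : ℕ) / N)| ≤
      1 / N * ∫ s in (0 : ℝ)..1, |deriv (deriv X) s| := by
  have hN' : (N : ℝ) ≠ 0 := by positivity
  simpa [Nat.sub_add_cancel hN, hN'] using hX.sum_abs_second_diff_le (x := fun k => k / N)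
    (h := 1 / N) (by positivity) (fun k => by push_cast; ring) (N - 1)

end SecondDifference

lemma sum_second_diff_mul_comm (q v : ℕ → ℝ) (n : ℕ) (hq0 : q 0 = 0) (hqn : q (n + 1) = 0)
    (hv0 : v 0 = 0) (hvn : v (n + 1) = 0) :
    ∑ i ∈ range n, (q i - 2 * q (i + 1) + q (i + 2)) * v (i + 1) =
      ∑ i ∈ range n, q (i + 1) * (v i - 2 * v (i + 1) + v (i + 2)) := by
  rw [← sub_eq_zero, ← sum_sub_distrib]
  calc _ = ∑ i ∈ range n, ((q (i + 1 + 1) * v (i + 1) - q (i + 1) * v i) -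
          (q (i + 1) * v (i + 1 + 1) - q i * v (i + 1))) :=
        sum_congr rfl fun i _ => by ring
    _ = 0 := by
        rw [sum_sub_distrib, sum_range_sub (fun i => q (i + 1) * v i),
          sum_range_sub (fun i => q i * v (i + 1))]
        simp [hq0, hqn, hv0, hvn]

lemma sin_sub_sub_two_mul_sin_add_sin_add (x θ : ℝ) :
    sin (x - θ) - 2 * sin x + sin (x + θ) = -(2 - 2 * cos θ) * sin x := by
  rw [sin_sub, sin_add]
  ring

theorem two_sub_two_cos_mul_abs_sum_le (q : ℕ → ℝ) (n : ℕ) (θ : ℝ) (hq0 : q 0 = 0)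
    (hqn : q (n + 1) = 0) (hθ : sin ((n + 1 : ℕ) * θ) = 0) :
    (2 - 2 * cos θ) * |∑ i ∈ range n, q (i + 1) * sin ((i + 1 : ℕ) * θ)| ≤
      ∑ i ∈ range n, |q i - 2 * q (i + 1) + q (i + 2)| := by
  set v : ℕ → ℝ := fun k => sin (k * θ)
  have heig (i : ℕ) : v i - 2 * v (i + 1) + v (i + 2) = -(2 - 2 * cos θ) * v (i + 1) := by
    simp only [v]
    push_cast
    rw [show (i : ℝ) * θ = (i + 1) * θ - θ by ring, show ((i : ℝ) + 2) * θ = (i + 1) * θ + θ by ring]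
    exact sin_sub_sub_two_mul_sin_add_sin_add _ _
  have hsum := sum_second_diff_mul_comm q v n hq0 hqn (by simp [v]) hθ
  have hcos : 0 ≤ 2 - 2 * cos θ := by linarith [cos_le_one θ]
  calc _ = |∑ i ∈ range n, (q i - 2 * q (i + 1) + q (i + 2)) * v (i + 1)| := by
        rw [hsum, ← abs_of_nonneg hcos, ← abs_mul, mul_sum, ← abs_neg, ← sum_neg_distrib]
        congr 1
        refine sum_congr rfl fun i _ => ?_
        rw [heig]
        ring
    _ ≤ ∑ i ∈ range n, |(q i - 2 * q (i + 1) + q (i + 2)) * v (i + 1)| :=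
        abs_sum_le_sum_abs _ _
    _ ≤ _ := sum_le_sum fun i _ => by
        rw [abs_mul]
        exact mul_le_of_le_one_right (abs_nonneg _) (abs_sin_le_one _)

lemma four_mul_sq_le_two_sub_two_cos_pi_mul {t : ℝ} (ht0 : 0 ≤ t) (ht1 : t ≤ 1) :
    4 * t ^ 2 ≤ 2 - 2 * cos (π * t) := by
  have := cos_le_one_sub_mul_cos_sq (x := π * t) (by
    rw [abs_of_nonneg (by positivity)]
    nlinarith [pi_pos])
  have hπ : 2 / π ^ 2 * (π * t) ^ 2 = 2 * t ^ 2 := by field_simp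
  linarith

theorem stmt_8_general (N : ℕ) (X : ℝ → ℝ) (hX : ContDiff ℝ 2 X)
    (h0 : X 0 = 1) (h1 : X 1 = 1)
    (α : ℝ) (hα : α = ∫ s in (0:ℝ)..1, |deriv (deriv X) s|) :
    ∀ j ∈ Set.Icc 1 (N-1),
      |Real.sqrt (2 / N) * ∑ i ∈ Finset.Icc 1 (N-1),
          ((1 / N) * X ((i : ℝ) / N) - 1 / N) * Real.sin (Real.pi * i * j / N)|
        ≤ (1 / 4) * Real.sqrt (2 / N) * α / (j : ℝ)^2 := by
  rintro j ⟨hj, hjN⟩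
  have hN1 : N - 1 + 1 = N := by omega
  have hNpos : (0 : ℝ) < N := by exact_mod_cast (by omega : 0 < N)
  set θ := π * (j / N)
  set q : ℕ → ℝ := fun i => 1 / N * X (i / N) - 1 / N
  set S := ∑ i ∈ range (N - 1), q (i + 1) * sin ((i + 1 : ℕ) * θ)
  have hS : ∑ i ∈ Icc 1 (N - 1), (1 / N * X ((i : ℝ) / N) - 1 / N) * sin (π * i * j / N) = S := by
    rw [← Ico_add_one_right_eq_Icc, hN1, sum_Ico_eq_sum_range]
    refine sum_congr rfl fun i _ => ?_
    simp only [q, θ, add_comm 1 i]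
    ring_nf
  have hθ : sin ((N - 1 + 1 : ℕ) * θ) = 0 := by
    rw [hN1, show (N : ℝ) * θ = j * π by simp only [θ]; field_simp, sin_nat_mul_pi]
  have hq (i : ℕ) : q i - 2 * q (i + 1) + q (i + 2) =
      1 / N * (X (i / N) - 2 * X ((i + 1 : ℕ) / N) + X ((i + 2 : ℕ) / N)) := by
    simp only [q]; ring
  have hdiscrete := two_sub_two_cos_mul_abs_sum_le q (N - 1) θ (by simp [q, h0])
    (by simp [q, hN1, hNpos.ne', h1]) hθ
  simp only [hq, abs_mul, ← mul_sum, abs_of_pos (one_div_pos.mpr hNpos)] at hdiscrete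
  have hcos : 4 * (j / N) ^ 2 ≤ 2 - 2 * cos θ :=
    four_mul_sq_le_two_sub_two_cos_pi_mul (by positivity)
      ((div_le_one hNpos).mpr (by exact_mod_cast hjN.trans (N.sub_le 1)))
  have hSα : |S| ≤ α / (4 * j ^ 2) := by
    rw [le_div_iff₀ (by positivity)]
    have := (mul_le_mul_of_nonneg_right hcos (abs_nonneg S)).trans <| hdiscrete.trans <|
      mul_le_mul_of_nonneg_left (hα ▸ hX.sum_abs_second_diff_div_le (by omega)) (by positivity)
    field_simp at this
    linarith
  rw [hS, abs_mul, abs_of_nonneg (sqrt_nonneg _)]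
  calc √(2 / N) * |S| ≤ √(2 / N) * (α / (4 * j ^ 2)) := by gcongr
    _ = _ := by ring

/-- Estimate of the Fourier coefficients `Q_j` of the initial deviations
`q_i(0) = (1/N) X (i/N) - 1/N`: `|Q_j| ≤ (1/4) √(2/N) α / j²` where `α = ∫₀¹ |X''|`. -/
theorem stmt_8 (N : ℕ) (hN : 2 ≤ N) (X : ℝ → ℝ) (hX : ContDiff ℝ 2 X)
    (h0 : X 0 = 1) (h1 : X 1 = 1)
    (α : ℝ) (hα : α = ∫ s in (0:ℝ)..1, |deriv (deriv X) s|) :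
    ∀ j ∈ Set.Icc 1 (N-1),
      |Real.sqrt (2 / N) * ∑ i ∈ Finset.Icc 1 (N-1),
          ((1 / N) * X ((i : ℝ) / N) - 1 / N) * Real.sin (Real.pi * i * j / N)|
        ≤ (1 / 4) * Real.sqrt (2 / N) * α / (j : ℝ)^2 :=
  stmt_8_general N X hX h0 h1 α hα
end

section
/- Consider the N-particle chain ẍ_k = ω²(x_{k+1} − x_k − a) − ω²(x_k − x_{k−1} − a) (with free ends), a = 1/N, ω = ω'N, and initial data x_{k+1}(0) − x_k(0) = (1/N)X(k/N), ẋ_{k+1}(0) − ẋ_k(0) = (1/N)V(k/N) with X, V ∈ C⁴([0,1]), X(0)=X(1)=1, V(0)=V(1)=0. Let α = ∫₀¹|X''|, β = ∫₀¹|V''|, and γ = 2α + β/ω'. Then for all t ≥ 0 and all k = 1,…,N−1, (1−γ)/N ≤ x_{k+1}(t) − x_k(t) ≤ (1+γ)/N. -/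
/-!
The gap deviations `q_k = x_{k+1} - x_k - 1/N`, extended by `q_0 = q_N = 0`, solve the discrete
wave equation `q̈_k = ω² (q_{k+1} - 2 q_k + q_{k-1})`, so by summation by parts the energy
`∑ q̇_k² + ω² ∑ (q_{k+1} - q_k)²` is conserved. As `q_0 = 0`, Cauchy–Schwarz bounds `ω² q_k²` by
`N` times the energy. The initial energy is controlled by the Lipschitz constants of `X` and `V`
on `[0, 1]`, which are at most `∫|X''|` and `∫|V''|` because, by Rolle, `X'` and `V'` vanish
somewhere in `[0, 1]`.
-/

open Finset

theorem abs_deriv_le_integral_abs_deriv_deriv {f : ℝ → ℝ} {a b : ℝ} (hf : ContDiff ℝ 2 f)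
    (hab : a < b) (hfab : f a = f b) {s : ℝ} (hs : s ∈ Set.Icc a b) :
    |deriv f s| ≤ ∫ y in a..b, |deriv (deriv f) y| := by
  have hf' : ContDiff ℝ 1 (deriv f) := hf.deriv'
  have hf'' : Continuous (deriv (deriv f)) := hf'.continuous_deriv le_rfl
  obtain ⟨c, hc, hc0⟩ := exists_deriv_eq_zero hab hf.continuous.continuousOn hfab
  have hFTC : ∫ y in c..s, deriv (deriv f) y = deriv f s := by
    rw [intervalIntegral.integral_deriv_eq_sub' _ rfl
      (fun _ _ => (hf'.differentiable one_ne_zero).differentiableAt) hf''.continuousOn,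
      hc0, sub_zero]
  have hsub : ∀ u v, a ≤ u → u ≤ v → v ≤ b →
      |∫ y in u..v, deriv (deriv f) y| ≤ ∫ y in a..b, |deriv (deriv f) y| :=
    fun u v hau huv hvb => (intervalIntegral.abs_integral_le_integral_abs huv).trans
      (intervalIntegral.integral_mono_interval hau huv hvb
        (Filter.Eventually.of_forall fun _ => abs_nonneg _) (hf''.abs.intervalIntegrable a b))
  rw [← hFTC]
  rcases le_total c s with hcs | hsc
  · exact hsub c s hc.1.le hcs hs.2
  · rw [intervalIntegral.integral_symm, abs_neg]
    exact hsub s c hs.1 hsc hc.2.le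

theorem abs_sub_le_integral_abs_deriv_deriv_mul {f : ℝ → ℝ} {a b : ℝ} (hf : ContDiff ℝ 2 f)
    (hab : a < b) (hfab : f a = f b) {s u : ℝ} (hs : s ∈ Set.Icc a b) (hu : u ∈ Set.Icc a b) :
    |f s - f u| ≤ (∫ y in a..b, |deriv (deriv f) y|) * |s - u| :=
  (convex_Icc a b).norm_image_sub_le_of_norm_deriv_le
    (fun _ _ => (hf.differentiable two_ne_zero).differentiableAt)
    (fun _ hy => abs_deriv_le_integral_abs_deriv_deriv hf hab hfab hy) hu hs

theorem abs_le_integral_abs_deriv_deriv_mul {f : ℝ → ℝ} {a b : ℝ} (hf : ContDiff ℝ 2 f)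
    (hab : a < b) (hfa : f a = 0) (hfb : f b = 0) {s : ℝ} (hs : s ∈ Set.Icc a b) :
    |f s| ≤ (∫ y in a..b, |deriv (deriv f) y|) * (b - a) := by
  have h := abs_sub_le_integral_abs_deriv_deriv_mul hf hab (hfa.trans hfb.symm) hs
    (Set.left_mem_Icc.mpr hab.le)
  rw [hfa, sub_zero, abs_of_nonneg (sub_nonneg.mpr hs.1)] at h
  exact h.trans (mul_le_mul_of_nonneg_left (by linarith [hs.2])
    (intervalIntegral.integral_nonneg hab.le fun _ _ => abs_nonneg _))

theorem sum_sub_mul_sub_add_sum_mul_laplacian (a b : ℕ → ℝ) (M : ℕ) :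
    ∑ k ∈ range (M + 1), (a (k + 1) - a k) * (b (k + 1) - b k)
      + ∑ k ∈ range M, b (k + 1) * (a (k + 2) - 2 * a (k + 1) + a k)
      = b (M + 1) * (a (M + 1) - a M) - b 0 * (a 1 - a 0) := by
  induction M with
  | zero => simp; ring
  | succ M ih =>
    rw [sum_range_succ, sum_range_succ (fun k => b (k + 1) * (a (k + 2) - 2 * a (k + 1) + a k))]
    linear_combination ih

theorem sq_le_mul_sum_sq_sub {q : ℕ → ℝ} (hq0 : q 0 = 0) {k n : ℕ} (hkn : k ≤ n) :
    q k ^ 2 ≤ n * ∑ j ∈ range n, (q (j + 1) - q j) ^ 2 := by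
  have htel : q k = ∑ j ∈ range k, (q (j + 1) - q j) := by rw [sum_range_sub, hq0, sub_zero]
  calc q k ^ 2 ≤ k * ∑ j ∈ range k, (q (j + 1) - q j) ^ 2 := by
        simpa [htel] using sq_sum_le_card_mul_sum_sq (s := range k) (f := fun j => q (j + 1) - q j)
    _ ≤ n * ∑ j ∈ range n, (q (j + 1) - q j) ^ 2 := by gcongr

def chainEnergy (ω : ℝ) (N : ℕ) (q p : ℕ → ℝ) : ℝ :=
  ∑ k ∈ range (N - 1), p (k + 1) ^ 2 + ω ^ 2 * ∑ k ∈ range N, (q (k + 1) - q k) ^ 2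

theorem hasDerivAt_chainEnergy_zero {N : ℕ} (hN : 0 < N) {ω : ℝ} {q p : ℝ → ℕ → ℝ}
    (hp0 : ∀ t, p t 0 = 0) (hpN : ∀ t, p t N = 0)
    (hq : ∀ t k, HasDerivAt (fun s => q s k) (p t k) t)
    (hp : ∀ t k, 0 < k → k < N →
      HasDerivAt (fun s => p s k) (ω ^ 2 * (q t (k + 1) - 2 * q t k + q t (k - 1))) t)
    (t : ℝ) : HasDerivAt (fun s => chainEnergy ω N (q s) (p s)) 0 t := by
  obtain ⟨M, rfl⟩ : ∃ M, N = M + 1 := ⟨N - 1, by omega⟩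
  have hkin : HasDerivAt (fun s => ∑ k ∈ range M, p s (k + 1) ^ 2)
      (∑ k ∈ range M, 2 * p t (k + 1) * (ω ^ 2 * (q t (k + 2) - 2 * q t (k + 1) + q t k))) t := by
    refine HasDerivAt.fun_sum fun k hk => ?_
    simpa using (hp t (k + 1) k.succ_pos (by simpa using hk)).fun_pow 2
  have hpot : HasDerivAt (fun s => ∑ k ∈ range (M + 1), (q s (k + 1) - q s k) ^ 2)
      (∑ k ∈ range (M + 1), 2 * (q t (k + 1) - q t k) * (p t (k + 1) - p t k)) t := by
    refine HasDerivAt.fun_sum fun k _ => ?_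
    simpa using ((hq t (k + 1)).fun_sub (hq t k)).fun_pow 2
  refine (hkin.add (hpot.const_mul (ω ^ 2))).congr_deriv ?_
  have hgreen := sum_sub_mul_sub_add_sum_mul_laplacian (q t) (p t) M
  rw [hp0, hpN] at hgreen
  simp only [mul_assoc, mul_left_comm _ (ω ^ 2), ← mul_sum] at hgreen ⊢
  linear_combination (2 * ω ^ 2) * hgreen

theorem chainEnergy_eq_of_wave {N : ℕ} (hN : 0 < N) {ω : ℝ} {q p : ℝ → ℕ → ℝ}
    (hp0 : ∀ t, p t 0 = 0) (hpN : ∀ t, p t N = 0)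
    (hq : ∀ t k, HasDerivAt (fun s => q s k) (p t k) t)
    (hp : ∀ t k, 0 < k → k < N →
      HasDerivAt (fun s => p s k) (ω ^ 2 * (q t (k + 1) - 2 * q t k + q t (k - 1))) t)
    (t : ℝ) : chainEnergy ω N (q t) (p t) = chainEnergy ω N (q 0) (p 0) :=
  is_const_of_deriv_eq_zero
    (fun s => (hasDerivAt_chainEnergy_zero hN hp0 hpN hq hp s).differentiableAt)
    (fun s => (hasDerivAt_chainEnergy_zero hN hp0 hpN hq hp s).deriv) t 0

theorem sq_mul_sq_le_mul_chainEnergy {N : ℕ} {ω : ℝ} {q : ℕ → ℝ} (p : ℕ → ℝ) (hq0 : q 0 = 0)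
    {k : ℕ} (hkN : k ≤ N) : ω ^ 2 * q k ^ 2 ≤ N * chainEnergy ω N q p := by
  have hkin : 0 ≤ ∑ k ∈ range (N - 1), p (k + 1) ^ 2 := sum_nonneg fun _ _ => sq_nonneg _
  have := mul_le_mul_of_nonneg_left (sq_le_mul_sum_sq_sub hq0 hkN) (sq_nonneg ω)
  unfold chainEnergy
  nlinarith [mul_nonneg (Nat.cast_nonneg (α := ℝ) N) hkin]

def dirichletDiff (N : ℕ) (y : ℕ → ℝ) (k : ℕ) : ℝ :=
  if 0 < k ∧ k < N then y (k + 1) - y k else 0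

section dirichletDiff

variable {N : ℕ}

@[simp]
theorem dirichletDiff_zero (y : ℕ → ℝ) : dirichletDiff N y 0 = 0 := by
  simp [dirichletDiff]

@[simp]
theorem dirichletDiff_self (y : ℕ → ℝ) : dirichletDiff N y N = 0 := by
  simp [dirichletDiff]

theorem dirichletDiff_of_pos_of_lt (y : ℕ → ℝ) {k : ℕ} (hk0 : 0 < k) (hkN : k < N) :
    dirichletDiff N y k = y (k + 1) - y k :=
  if_pos ⟨hk0, hkN⟩

theorem hasDerivAt_dirichletDiff {y : ℝ → ℕ → ℝ} {y' : ℕ → ℝ} {t : ℝ}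
    (hy : ∀ j, HasDerivAt (fun s => y s j) (y' j) t) (k : ℕ) :
    HasDerivAt (fun s => dirichletDiff N (y s) k) (dirichletDiff N y' k) t := by
  unfold dirichletDiff
  split_ifs
  · exact (hy (k + 1)).sub (hy k)
  · exact hasDerivAt_const t 0

theorem dirichletDiff_eq_of_grid {y : ℕ → ℝ} {f : ℝ → ℝ} (hf0 : f 0 = 0) (hf1 : f 1 = 0)
    (hy : ∀ k ∈ Set.Icc 1 (N - 1), y (k + 1) - y k = 1 / N * f (k / N)) :
    ∀ k ≤ N, dirichletDiff N y k = 1 / N * f (k / N) := by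
  intro k hkN
  unfold dirichletDiff
  split_ifs with hk
  · exact hy k ⟨hk.1, by omega⟩
  · obtain rfl | rfl : k = 0 ∨ k = N := by omega
    · simp [hf0]
    · rcases Nat.eq_zero_or_pos k with rfl | hk0
      · simp [hf0]
      · rw [div_self (Nat.cast_ne_zero.mpr hk0.ne' : (k : ℝ) ≠ 0), hf1, mul_zero]

end dirichletDiff

theorem chainEnergy_le_of_grid {N : ℕ} (hN : 0 < N) {ω L₁ L₂ : ℝ} {f g : ℝ → ℝ} {q p : ℕ → ℝ}
    (hq : ∀ k ≤ N, q k = 1 / N * f (k / N)) (hp : ∀ k ≤ N, p k = 1 / N * g (k / N))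
    (hf : ∀ s ∈ Set.Icc (0 : ℝ) 1, ∀ u ∈ Set.Icc (0 : ℝ) 1, |f s - f u| ≤ L₁ * |s - u|)
    (hg : ∀ s ∈ Set.Icc (0 : ℝ) 1, |g s| ≤ L₂) :
    chainEnergy ω N q p ≤ (L₂ ^ 2 + (ω * L₁ / N) ^ 2) / N := by
  have hN0 : (0 : ℝ) < N := by exact_mod_cast hN
  have hgrid : ∀ k ≤ N, (k / N : ℝ) ∈ Set.Icc 0 1 := fun k hk =>
    ⟨by positivity, div_le_one_of_le₀ (by exact_mod_cast hk) hN0.le⟩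
  have sq_le_of_abs_le : ∀ {a b : ℝ}, |a| ≤ b → a ^ 2 ≤ b ^ 2 := fun h =>
    sq_le_sq' (abs_le.mp h).1 (abs_le.mp h).2
  have hkin : ∀ k ∈ range (N - 1), p (k + 1) ^ 2 ≤ (L₂ / N) ^ 2 := by
    intro k hk
    have hk : k + 1 ≤ N := by have := mem_range.mp hk; omega
    refine sq_le_of_abs_le ?_
    rw [hp _ hk, one_div_mul_eq_div, abs_div, abs_of_pos hN0]
    gcongr
    exact hg _ (hgrid _ hk)
  have hpot : ∀ k ∈ range N, (q (k + 1) - q k) ^ 2 ≤ (L₁ / N ^ 2) ^ 2 := by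
    intro k hk
    have hk : k + 1 ≤ N := mem_range.mp hk
    refine sq_le_of_abs_le ?_
    have hstep : |((k + 1 : ℕ) : ℝ) / N - k / N| = 1 / N := by
      rw [← sub_div, Nat.cast_succ, add_sub_cancel_left, abs_of_pos (by positivity)]
    have := hf _ (hgrid _ hk) _ (hgrid k (by omega))
    rw [hstep] at this
    rw [hq _ hk, hq k (by omega), ← mul_sub, abs_mul, abs_of_pos (by positivity)]
    calc 1 / N * |f ((k + 1 : ℕ) / N) - f (k / N)| ≤ 1 / N * (L₁ * (1 / N)) := by gcongr
      _ = L₁ / N ^ 2 := by ring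
  calc chainEnergy ω N q p
      ≤ (N - 1 : ℕ) • (L₂ / N) ^ 2 + ω ^ 2 * (N • (L₁ / N ^ 2) ^ 2) := by
        unfold chainEnergy
        gcongr
        · simpa using sum_le_card_nsmul _ _ _ hkin
        · simpa using sum_le_card_nsmul _ _ _ hpot
    _ ≤ N * (L₂ / N) ^ 2 + ω ^ 2 * (N * (L₁ / N ^ 2) ^ 2) := by
        simp only [nsmul_eq_mul]
        gcongr
        exact_mod_cast N.sub_le 1
    _ = (L₂ ^ 2 + (ω * L₁ / N) ^ 2) / N := by field_simp

section chain

variable {N : ℕ} {ω : ℝ} {x : ℝ → ℕ → ℝ}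

theorem deriv_deriv_eq_dirichletDiff_sub (hN : 2 ≤ N)
    (hode1 : ∀ t : ℝ, deriv (deriv (fun s => x s 1)) t = ω ^ 2 * (x t 2 - x t 1 - 1 / N))
    (hodek : ∀ t : ℝ, ∀ k ∈ Set.Icc 2 (N - 1), deriv (deriv (fun s => x s k)) t
      = ω ^ 2 * (x t (k + 1) - x t k - 1 / N) - ω ^ 2 * (x t k - x t (k - 1) - 1 / N))
    (hodeN : ∀ t : ℝ, deriv (deriv (fun s => x s N)) t
      = -(ω ^ 2) * (x t N - x t (N - 1) - 1 / N))
    (t : ℝ) (k : ℕ) (hk0 : 0 < k) (hkN : k ≤ N) :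
    deriv (deriv (fun s => x s k)) t = ω ^ 2 * (dirichletDiff N (fun j => x t j - j / N) k
      - dirichletDiff N (fun j => x t j - j / N) (k - 1)) := by
  have hgap : ∀ j, 0 < j → j < N →
      dirichletDiff N (fun j => x t j - j / N) j = x t (j + 1) - x t j - 1 / N := by
    intro j hj0 hjN
    rw [dirichletDiff_of_pos_of_lt _ hj0 hjN]
    push_cast
    ring
  rcases Nat.lt_or_ge k 2 with hk1 | hk2
  · obtain rfl : k = 1 := by omega
    rw [hode1, hgap 1 one_pos (by omega), dirichletDiff_zero, sub_zero]
  · obtain hkN | rfl := hkN.lt_or_eq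
    · have hk : k - 1 + 1 = k := by omega
      rw [hodek t k ⟨hk2, by omega⟩, hgap k (by omega) hkN, hgap (k - 1) (by omega) (by omega), hk]
      ring
    · have hk : k - 1 + 1 = k := by omega
      rw [hodeN, dirichletDiff_self, hgap (k - 1) (by omega) (by omega), hk]
      ring

theorem hasDerivAt_dirichletDiff_deriv (hsm : ∀ k, ContDiff ℝ 2 (fun t => x t k)) (hN : 2 ≤ N)
    (hode1 : ∀ t : ℝ, deriv (deriv (fun s => x s 1)) t = ω ^ 2 * (x t 2 - x t 1 - 1 / N))
    (hodek : ∀ t : ℝ, ∀ k ∈ Set.Icc 2 (N - 1), deriv (deriv (fun s => x s k)) t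
      = ω ^ 2 * (x t (k + 1) - x t k - 1 / N) - ω ^ 2 * (x t k - x t (k - 1) - 1 / N))
    (hodeN : ∀ t : ℝ, deriv (deriv (fun s => x s N)) t
      = -(ω ^ 2) * (x t N - x t (N - 1) - 1 / N))
    (t : ℝ) (k : ℕ) (hk0 : 0 < k) (hkN : k < N) :
    HasDerivAt (fun s => dirichletDiff N (fun j => deriv (fun u => x u j) s) k)
      (ω ^ 2 * (dirichletDiff N (fun j => x t j - j / N) (k + 1)
        - 2 * dirichletDiff N (fun j => x t j - j / N) k
        + dirichletDiff N (fun j => x t j - j / N) (k - 1))) t := by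
  have hacc := deriv_deriv_eq_dirichletDiff_sub hN hode1 hodek hodeN t
  convert hasDerivAt_dirichletDiff (fun j =>
    (((hsm j).deriv'.differentiable one_ne_zero) t).hasDerivAt) k using 1
  rw [dirichletDiff_of_pos_of_lt (fun j => deriv (deriv fun s => x s j) t) hk0 hkN,
    hacc (k + 1) (by omega) hkN, hacc k hk0 hkN.le, Nat.add_sub_cancel]
  ring

end chain

theorem abs_le_of_wave_of_grid {N : ℕ} (hN : 0 < N) {ω L₁ L₂ : ℝ} (hω : 0 < ω)
    {q p : ℝ → ℕ → ℝ} {f g : ℝ → ℝ}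
    (hq0 : ∀ t, q t 0 = 0) (hp0 : ∀ t, p t 0 = 0) (hpN : ∀ t, p t N = 0)
    (hq : ∀ t k, HasDerivAt (fun s => q s k) (p t k) t)
    (hp : ∀ t k, 0 < k → k < N → HasDerivAt (fun s => p s k)
      ((ω * N) ^ 2 * (q t (k + 1) - 2 * q t k + q t (k - 1))) t)
    (hqi : ∀ k ≤ N, q 0 k = 1 / N * f (k / N)) (hpi : ∀ k ≤ N, p 0 k = 1 / N * g (k / N))
    (hf : ∀ s ∈ Set.Icc (0 : ℝ) 1, ∀ u ∈ Set.Icc (0 : ℝ) 1, |f s - f u| ≤ L₁ * |s - u|)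
    (hg : ∀ s ∈ Set.Icc (0 : ℝ) 1, |g s| ≤ L₂) (t : ℝ) {k : ℕ} (hkN : k ≤ N) :
    |q t k| ≤ (L₁ + L₂ / ω) / N := by
  have hN0 : (0 : ℝ) < N := by exact_mod_cast hN
  have hL₁ : 0 ≤ L₁ := by
    simpa using (abs_nonneg _).trans (hf 1 (Set.right_mem_Icc.mpr zero_le_one) 0
      (Set.left_mem_Icc.mpr zero_le_one))
  have hL₂ : 0 ≤ L₂ := (abs_nonneg _).trans (hg 0 (Set.left_mem_Icc.mpr zero_le_one))
  have hsq : (ω * N * q t k) ^ 2 ≤ (L₂ + ω * L₁) ^ 2 := calc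
    _ ≤ N * chainEnergy (ω * N) N (q t) (p t) := by
        rw [mul_pow]; exact sq_mul_sq_le_mul_chainEnergy _ (hq0 t) hkN
    _ = N * chainEnergy (ω * N) N (q 0) (p 0) := by rw [chainEnergy_eq_of_wave hN hp0 hpN hq hp]
    _ ≤ N * ((L₂ ^ 2 + (ω * N * L₁ / N) ^ 2) / N) := by
        gcongr; exact chainEnergy_le_of_grid hN hqi hpi hf hg
    _ = L₂ ^ 2 + (ω * L₁) ^ 2 := by field_simp
    _ ≤ (L₂ + ω * L₁) ^ 2 := by nlinarith [mul_nonneg hL₂ (mul_nonneg hω.le hL₁)]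
  have h := abs_le_of_sq_le_sq hsq (by positivity)
  rw [abs_mul, abs_of_pos (by positivity : 0 < ω * N)] at h
  rw [le_div_iff₀ hN0, ← mul_le_mul_iff_right₀ hω, mul_add, mul_div_cancel₀ _ hω.ne']
  linarith

theorem stmt_10_general (N : ℕ) (ω' : ℝ) (hω : 0 < ω')
    (X V : ℝ → ℝ) (hX : ContDiff ℝ 4 X) (hV : ContDiff ℝ 4 V)
    (hX0 : X 0 = 1) (hX1 : X 1 = 1) (hV0 : V 0 = 0) (hV1 : V 1 = 0)
    (x : ℝ → ℕ → ℝ) (hsm : ∀ k, ContDiff ℝ 2 (fun t => x t k))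
    (hode1 : ∀ t : ℝ, deriv (deriv (fun s => x s 1)) t
      = (ω' * N)^2 * (x t 2 - x t 1 - 1 / N))
    (hodek : ∀ t : ℝ, ∀ k ∈ Set.Icc 2 (N-1), deriv (deriv (fun s => x s k)) t
      = (ω' * N)^2 * (x t (k+1) - x t k - 1 / N)
        - (ω' * N)^2 * (x t k - x t (k-1) - 1 / N))
    (hodeN : ∀ t : ℝ, deriv (deriv (fun s => x s N)) t
      = -((ω' * N)^2) * (x t N - x t (N-1) - 1 / N))
    (hinit : ∀ k ∈ Set.Icc 1 (N-1), x 0 (k+1) - x 0 k = (1 / N) * X ((k : ℝ) / N))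
    (hinitv : ∀ k ∈ Set.Icc 1 (N-1),
      deriv (fun s => x s (k+1)) 0 - deriv (fun s => x s k) 0 = (1 / N) * V ((k : ℝ) / N))
    (α β γ : ℝ)
    (hα : α = ∫ s in (0:ℝ)..1, |deriv (deriv X) s|)
    (hβ : β = ∫ s in (0:ℝ)..1, |deriv (deriv V) s|)
    (hγ : γ = 2 * α + β / ω') :
    ∀ t : ℝ, 0 ≤ t → ∀ k ∈ Set.Icc 1 (N-1),
      (1 - γ) / N ≤ x t (k+1) - x t k ∧ x t (k+1) - x t k ≤ (1 + γ) / N := by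
  intro t _ k ⟨hk1, hkN⟩
  have hN : 2 ≤ N := by omega
  have hX2 : ContDiff ℝ 2 X := hX.of_le (by norm_num)
  have hV2 : ContDiff ℝ 2 V := hV.of_le (by norm_num)
  -- `X 0 = X 1 = 1` is what lets the profile `(X - 1) / N` also match the ends `q_0 = q_N = 0`
  have hqi := dirichletDiff_eq_of_grid (y := fun j => x 0 j - j / N) (f := fun s => X s - 1)
    (sub_eq_zero.mpr hX0) (sub_eq_zero.mpr hX1) fun j hj => by
      push_cast; linear_combination hinit j hj
  have hbound := abs_le_of_wave_of_grid (f := fun s => X s - 1) (by omega) hω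
    (fun _ => dirichletDiff_zero _) (fun _ => dirichletDiff_zero _) (fun _ => dirichletDiff_self _)
    (fun s => hasDerivAt_dirichletDiff fun j =>
      (((hsm j).differentiable two_ne_zero) s).hasDerivAt.sub_const _)
    (hasDerivAt_dirichletDiff_deriv hsm hN hode1 hodek hodeN) hqi
    (dirichletDiff_eq_of_grid hV0 hV1 hinitv)
    (fun s hs u hu => by
      simpa [← hα] using
        abs_sub_le_integral_abs_deriv_deriv_mul hX2 one_pos (hX0.trans hX1.symm) hs hu)
    (fun s hs => by
      simpa [← hβ] using abs_le_integral_abs_deriv_deriv_mul hV2 one_pos hV0 hV1 hs)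
    t (k := k) (by omega)
  have hgap : dirichletDiff N (fun j => x t j - j / N) k = x t (k + 1) - x t k - 1 / N := by
    rw [dirichletDiff_of_pos_of_lt _ hk1 (by omega)]; push_cast; ring
  rw [hgap, abs_le] at hbound
  have hα0 : 0 ≤ α := hα ▸ intervalIntegral.integral_nonneg zero_le_one fun _ _ => abs_nonneg _
  have hγ' : (α + β / ω') / N ≤ γ / N := by gcongr; linarith
  constructor <;> linarith [hbound.1, hbound.2, add_div 1 γ (N : ℝ), sub_div 1 γ (N : ℝ)]

/-- γ-bounds for the harmonic chain: with `a = 1/N`, `ω = ω'N`, initial gaps and gap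
velocities given by smooth profiles `X, V` with `X(0)=X(1)=1`, `V(0)=V(1)=0`, and
`γ = 2α + β/ω'` where `α = ∫₀¹|X''|`, `β = ∫₀¹|V''|`, all gaps stay in
`[(1-γ)/N, (1+γ)/N]` for all `t ≥ 0`. -/
theorem stmt_10 (N : ℕ) (hN : 2 ≤ N) (ω' : ℝ) (hω : 0 < ω')
    (X V : ℝ → ℝ) (hX : ContDiff ℝ 4 X) (hV : ContDiff ℝ 4 V)
    (hX0 : X 0 = 1) (hX1 : X 1 = 1) (hV0 : V 0 = 0) (hV1 : V 1 = 0)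
    (x : ℝ → ℕ → ℝ) (hsm : ∀ k, ContDiff ℝ 2 (fun t => x t k))
    (hode1 : ∀ t : ℝ, deriv (deriv (fun s => x s 1)) t
      = (ω' * N)^2 * (x t 2 - x t 1 - 1 / N))
    (hodek : ∀ t : ℝ, ∀ k ∈ Set.Icc 2 (N-1), deriv (deriv (fun s => x s k)) t
      = (ω' * N)^2 * (x t (k+1) - x t k - 1 / N)
        - (ω' * N)^2 * (x t k - x t (k-1) - 1 / N))
    (hodeN : ∀ t : ℝ, deriv (deriv (fun s => x s N)) t
      = -((ω' * N)^2) * (x t N - x t (N-1) - 1 / N))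
    (hinit : ∀ k ∈ Set.Icc 1 (N-1), x 0 (k+1) - x 0 k = (1 / N) * X ((k : ℝ) / N))
    (hinitv : ∀ k ∈ Set.Icc 1 (N-1),
      deriv (fun s => x s (k+1)) 0 - deriv (fun s => x s k) 0 = (1 / N) * V ((k : ℝ) / N))
    (α β γ : ℝ)
    (hα : α = ∫ s in (0:ℝ)..1, |deriv (deriv X) s|)
    (hβ : β = ∫ s in (0:ℝ)..1, |deriv (deriv V) s|)
    (hγ : γ = 2 * α + β / ω') :
    ∀ t : ℝ, 0 ≤ t → ∀ k ∈ Set.Icc 1 (N-1),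
      (1 - γ) / N ≤ x t (k+1) - x t k ∧ x t (k+1) - x t k ≤ (1 + γ) / N :=
  stmt_10_general N ω' hω X V hX hV hX0 hX1 hV0 hV1 x hsm hode1 hodek hodeN hinit hinitv α β γ hα hβ
    hγ
end

section
/- If for all t and k one has (1−γ)/N ≤ x_{k+1}(t) − x_k(t) ≤ (1+γ)/N with γ < min(r, (1−r)/2), then for all t and k: (1−r)/N ≤ x_{k+1}(t) − x_k(t) ≤ (1+r)/N and x_{k+2}(t) − x_k(t) > (1+r)/N. Consequently, a trajectory satisfying the harmonic nearest-neighbor dynamics also solves the dynamics for any potential I in the class 𝐈(1/N, r/N). -/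
/-- If the gaps satisfy the γ-bounds with `γ < min(r, (1-r)/2)`, then all gaps lie in
`[(1-r)/N, (1+r)/N]`, next-nearest distances exceed `(1+r)/N`, and consequently any
potential `I` of the class `𝐈(1/N, r/N)` (quadratic `(s-1/N)²` for `|s-1/N| < r/N`,
constant for `s ≥ (1+r)/N`) evaluates on nearest-neighbour distances exactly as the
quadratic potential and gives no force between non-neighbours. -/
theorem stmt_12 (N : ℕ) (hN : 2 ≤ N) (γ r : ℝ) (hr0 : 0 < r) (hr1 : r < 1)
    (hγ : γ < min r ((1 - r) / 2))
    (x : ℝ → ℕ → ℝ)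
    (hbound : ∀ t : ℝ, ∀ k ∈ Set.Icc 1 (N-1),
      (1 - γ) / N ≤ x t (k+1) - x t k ∧ x t (k+1) - x t k ≤ (1 + γ) / N) :
    (∀ t : ℝ, ∀ k ∈ Set.Icc 1 (N-1),
      (1 - r) / N ≤ x t (k+1) - x t k ∧ x t (k+1) - x t k ≤ (1 + r) / N) ∧
    (∀ t : ℝ, ∀ k ∈ Set.Icc 1 (N-2), x t (k+2) - x t k > (1 + r) / N) ∧
    (∀ I : ℝ → ℝ,
      (∀ s : ℝ, |s - 1 / N| < r / N → I s = (s - 1 / N)^2) →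
      (∀ s₁ s₂ : ℝ, 1 / N + r / N ≤ s₁ → 1 / N + r / N ≤ s₂ → I s₁ = I s₂) →
      (∀ t : ℝ, ∀ k ∈ Set.Icc 1 (N-1),
        I (x t (k+1) - x t k) = (x t (k+1) - x t k - 1 / N)^2) ∧
      (∀ t : ℝ, ∀ j ∈ Set.Icc 1 N, ∀ k ∈ Set.Icc 1 N, j + 2 ≤ k →
        I (x t k - x t j) = I (1 / N + r / N + 1 / N))) := by
  have hNpos : (0:ℝ) < N := by
    have : (0:ℕ) < N := by omega
    exact_mod_cast this
  have hγr : γ < r := lt_of_lt_of_le hγ (min_le_left _ _)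
  have hγ2 : γ < (1 - r) / 2 := lt_of_lt_of_le hγ (min_le_right _ _)
  -- gap bounds with r
  have hgap : ∀ t : ℝ, ∀ k ∈ Set.Icc 1 (N-1),
      (1 - r) / N ≤ x t (k+1) - x t k ∧ x t (k+1) - x t k ≤ (1 + r) / N := by
    intro t k hk
    obtain ⟨h1, h2⟩ := hbound t k hk
    constructor
    · refine le_trans ?_ h1; gcongr ?_ / _; linarith
    · refine le_trans h2 ?_; gcongr ?_ / _; linarith
  -- next-nearest distances
  have hnn : ∀ t : ℝ, ∀ k ∈ Set.Icc 1 (N-2), x t (k+2) - x t k > (1 + r) / N := by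
    intro t k hk
    simp only [Set.mem_Icc] at hk
    obtain ⟨h1, _⟩ := hbound t k (by simp only [Set.mem_Icc]; omega)
    obtain ⟨h1', _⟩ := hbound t (k+1) (by simp only [Set.mem_Icc]; omega)
    have : x t (k+2) - x t k = (x t (k+2) - x t (k+1)) + (x t (k+1) - x t k) := by ring
    rw [this]
    have key : (1+r)/N < 2 * ((1-γ)/N) := by
      rw [← sub_pos]
      have : 2 * ((1-γ)/N) - (1+r)/N = (1 - r - 2*γ)/N := by ring
      rw [this]
      apply div_pos _ hNpos; linarith
    have : x t (k+1+1) - x t (k+1) ≥ (1-γ)/N := h1'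
    linarith
  refine ⟨hgap, hnn, ?_⟩
  intro I hquad hconst
  -- each gap is in the open interval, strictly
  have hgapstrict : ∀ t : ℝ, ∀ k ∈ Set.Icc 1 (N-1),
      |x t (k+1) - x t k - 1/N| < r/N := by
    intro t k hk
    obtain ⟨h1, h2⟩ := hbound t k hk
    rw [abs_lt]
    have hA : (1-γ)/N - 1/N = -(γ/N) := by ring
    have hB : (1+γ)/N - 1/N = γ/N := by ring
    have hγr' : γ/N < r/N := by gcongr
    constructor
    · nlinarith
    · nlinarith
  constructor
  · intro t k hk
    exact hquad _ (hgapstrict t k hk)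
  · -- telescoping lower bound
    have key : ∀ t : ℝ, ∀ j : ℕ, 1 ≤ j → ∀ k : ℕ, j ≤ k → k ≤ N →
        ((k - j : ℕ) : ℝ) * ((1-γ)/N) ≤ x t k - x t j := by
      intro t j hj k hk
      induction k, hk using Nat.le_induction with
      | base => intro _; simp
      | succ k hk ih =>
        intro hkN
        have ih' := ih (by omega)
        obtain ⟨h1, _⟩ := hbound t k (by simp only [Set.mem_Icc]; omega)
        have hc : ((k + 1 - j : ℕ) : ℝ) = ((k - j : ℕ) : ℝ) + 1 := by
          have : k + 1 - j = (k - j) + 1 := by omega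
          rw [this]; push_cast; ring
        rw [hc]
        nlinarith
    intro t j hj k hk hjk
    simp only [Set.mem_Icc] at hj hk
    have hkey := key t j hj.1 k (by omega) hk.2
    have h2 : (2:ℝ) ≤ ((k - j : ℕ) : ℝ) := by
      have : 2 ≤ k - j := by omega
      exact_mod_cast this
    have hpos : (0:ℝ) < (1-γ)/N := by
      apply div_pos _ hNpos; linarith
    have hdist : 1/N + r/N ≤ x t k - x t j := by
      have h2g : 2 * ((1-γ)/N) ≤ x t k - x t j := by nlinarith
      have : (1+r)/N < 2 * ((1-γ)/N) := by
        rw [← sub_pos]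
        have : 2 * ((1-γ)/N) - (1+r)/N = (1 - r - 2*γ)/N := by ring
        rw [this]; apply div_pos _ hNpos; linarith
      have heq : 1/N + r/N = (1+r)/N := by ring
      linarith
    apply hconst _ _ hdist
    have : (0:ℝ) ≤ 1/N := by positivity
    linarith
end

section
/- With y(t,x) = G(t,z(x)) where G solves G_tt = (ω')²G_zz, velocity u(t,y(t,x)) = y_t(t,x), inverse flow x(t,y), and density ρ(t,y) = d/dy[z(x(t,y))], the velocity field satisfies the Euler equation u_t + u u_y = −(1/ρ)·p_y with pressure p(t,y) = −(ω')²/ρ(t,y) + C for any constant C. -/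
/-!
Along the particle path `s ↦ y s a` the velocity is `G_t(s, z a)`, so the material derivative
`u_t + u u_y` is the acceleration `G_tt = (ω')² G_zz`. On the other hand `y t ∘ x t = id` gives
`G_z(t, z(x t w)) · ρ t w = 1`, so the pressure is `-(ω')² G_z(t, z(x t ·)) + C`, whose
`w`-derivative is `-(ω')² G_zz · ρ`; dividing by `-ρ` gives the same acceleration.
-/

open Function

section PartialMaps

variable {n : WithTop ℕ∞} {f : ℝ → ℝ → ℝ}

theorem ContDiff.uncurry_apply_left (hf : ContDiff ℝ n (uncurry f)) (t : ℝ) :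
    ContDiff ℝ n (f t) :=
  hf.comp (contDiff_const.prodMk contDiff_id)

theorem ContDiff.uncurry_apply_right (hf : ContDiff ℝ n (uncurry f)) (w : ℝ) :
    ContDiff ℝ n (fun s => f s w) :=
  hf.comp (contDiff_id.prodMk contDiff_const)

end PartialMaps

theorem deriv_mul_deriv_eq_one_of_leftInverse {f g : ℝ → ℝ} (h : LeftInverse g f) {w : ℝ}
    (hg : DifferentiableAt ℝ g (f w)) (hf : DifferentiableAt ℝ f w) :
    deriv g (f w) * deriv f w = 1 := by
  have hcomp : HasDerivAt (g ∘ f) (deriv g (f w) * deriv f w) w :=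
    hg.hasDerivAt.comp w hf.hasDerivAt
  rw [h.comp_eq_id] at hcomp
  exact hcomp.unique (hasDerivAt_id w)

theorem hasDerivAt_apply_path {u : ℝ → ℝ → ℝ} {γ : ℝ → ℝ} {t v : ℝ}
    (hu : DifferentiableAt ℝ (uncurry u) (t, γ t)) (hγ : HasDerivAt γ v t) :
    HasDerivAt (fun s => u s (γ s))
      (deriv (fun s => u s (γ t)) t + v * deriv (u t) (γ t)) t := by
  set L := fderiv ℝ (uncurry u) (t, γ t)
  have hL : HasFDerivAt (uncurry u) L (t, γ t) := hu.hasFDerivAt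
  have ht : HasDerivAt (fun s => u s (γ t)) (L (1, 0)) t :=
    hL.comp_hasDerivAt t (f := fun s => (s, γ t)) ((hasDerivAt_id t).prodMk (hasDerivAt_const t _))
  have hw : HasDerivAt (u t) (L (0, 1)) (γ t) :=
    hL.comp_hasDerivAt (γ t) (f := fun s => (t, s))
      ((hasDerivAt_const _ t).prodMk (hasDerivAt_id _))
  have hpath : HasDerivAt (fun s => u s (γ s)) (L (1, v)) t :=
    hL.comp_hasDerivAt t (f := fun s => (s, γ s)) ((hasDerivAt_id t).prodMk hγ)
  have hsplit : L (1, v) = L (1, 0) + v * L (0, 1) := by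
    rw [← smul_eq_mul, ← L.map_smul, ← L.map_add]
    simp
  rwa [ht.deriv, hw.deriv, ← hsplit]

theorem stmt_18_general (ω' C : ℝ)
    (G : ℝ → ℝ → ℝ) (hG : ContDiff ℝ 3 (Function.uncurry G))
    (hwave : ∀ t w : ℝ, deriv (deriv (fun s => G s w)) t
      = ω'^2 * deriv (deriv (fun w' => G t w')) w)
    (z : ℝ → ℝ) (hz : ContDiff ℝ 3 z)
    (y : ℝ → ℝ → ℝ) (hy : ∀ t a : ℝ, y t a = G t (z a))
    (x : ℝ → ℝ → ℝ) (hx : ContDiff ℝ 2 (Function.uncurry x))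
    (hinv : ∀ t w : ℝ, y t (x t w) = w)
    (u : ℝ → ℝ → ℝ) (hu : ContDiff ℝ 1 (Function.uncurry u))
    (huv : ∀ t a : ℝ, u t (y t a) = deriv (fun s => y s a) t)
    (ρ : ℝ → ℝ → ℝ) (hρ : ∀ t w : ℝ, ρ t w = deriv (fun w' => z (x t w')) w)
    (hρpos : ∀ t w : ℝ, 0 < ρ t w)
    (p : ℝ → ℝ → ℝ) (hp : ∀ t w : ℝ, p t w = -(ω'^2) / ρ t w + C) :
    ∀ t w : ℝ, deriv (fun s => u s w) t + u t w * deriv (u t) w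
      = -(1 / ρ t w) * deriv (fun w' => p t w') w := by
  intro t w
  set a := x t w
  have hGt : ContDiff ℝ 2 (G t) := (hG.uncurry_apply_left t).of_le (by norm_num)
  have hzx : Differentiable ℝ (fun w' => z (x t w')) :=
    (hz.differentiable (by norm_num)).comp ((hx.uncurry_apply_left t).differentiable (by norm_num))
  have hdensity : ∀ w', HasDerivAt (fun w' => z (x t w')) (ρ t w') w' := fun w' => by
    rw [hρ]; exact (hzx w').hasDerivAt
  have hGz_inv : ∀ w', deriv (G t) (z (x t w')) = 1 / ρ t w' := fun w' => by
    rw [eq_div_iff (hρpos t w').ne', hρ]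
    exact deriv_mul_deriv_eq_one_of_leftInverse (f := fun w' => z (x t w'))
      (fun w' => (hy t _).symm.trans (hinv t w')) (hGt.differentiable (by norm_num) _) (hzx w')
  have hpressure : HasDerivAt (fun w' => p t w')
      (-(ω'^2) * (deriv (deriv (G t)) (z a) * ρ t w)) w := by
    have hp_eq : (fun w' => p t w') = fun w' => -(ω'^2) * deriv (G t) (z (x t w')) + C := by
      funext w'; rw [hp, hGz_inv]; ring
    rw [hp_eq]
    exact (((hGt.differentiable_deriv_two _).hasDerivAt.comp w (hdensity w)).const_mul _).add_const C
  have hpath : HasDerivAt (fun s => y s a) (u t w) t := by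
    have hyG : (fun s => y s a) = fun s => G s (z a) := funext fun s => hy s a
    rw [← hinv t w, huv, hyG]
    exact ((hG.uncurry_apply_right (z a)).differentiable (by norm_num) t).hasDerivAt
  have hvelocity : (fun s => u s (y s a)) = deriv (fun s => G s (z a)) := by
    funext s; rw [huv, funext fun s => hy s a]
  have haccel : deriv (fun s => u s w) t + u t w * deriv (u t) w
      = ω'^2 * deriv (deriv (G t)) (z a) := by
    have h := (hasDerivAt_apply_path (hu.differentiable one_ne_zero _) hpath).deriv
    beta_reduce at h
    rw [hvelocity, hwave, hinv t w] at h
    exact h.symm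
  rw [haccel, hpressure.deriv]
  field_simp [(hρpos t w).ne']

/-- Euler equation (momentum conservation) and equation of state: with
`y(t,x) = G(t,z(x))` where `G` solves `G_tt = (ω')² G_zz` and `G_z > 0`, inverse flow
`x(t,y)`, velocity `u(t,y(t,x)) = y_t(t,x)`, density `ρ(t,y) = d/dy [z(x(t,y))] > 0`,
and pressure `p = -(ω')²/ρ + C`, the velocity field satisfies
`u_t + u u_y = -(1/ρ) p_y`. -/
theorem stmt_18 (ω' C : ℝ) (hω : 0 < ω')
    (G : ℝ → ℝ → ℝ) (hG : ContDiff ℝ 3 (Function.uncurry G))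
    (hwave : ∀ t w : ℝ, deriv (deriv (fun s => G s w)) t
      = ω'^2 * deriv (deriv (fun w' => G t w')) w)
    (hGz : ∀ t w : ℝ, 0 < deriv (G t) w)
    (z : ℝ → ℝ) (hz : ContDiff ℝ 3 z) (hzmono : ∀ a : ℝ, 0 < deriv z a)
    (y : ℝ → ℝ → ℝ) (hy : ∀ t a : ℝ, y t a = G t (z a))
    (x : ℝ → ℝ → ℝ) (hx : ContDiff ℝ 2 (Function.uncurry x))
    (hinv : ∀ t w : ℝ, y t (x t w) = w)
    (u : ℝ → ℝ → ℝ) (hu : ContDiff ℝ 1 (Function.uncurry u))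
    (huv : ∀ t a : ℝ, u t (y t a) = deriv (fun s => y s a) t)
    (ρ : ℝ → ℝ → ℝ) (hρ : ∀ t w : ℝ, ρ t w = deriv (fun w' => z (x t w')) w)
    (hρpos : ∀ t w : ℝ, 0 < ρ t w)
    (p : ℝ → ℝ → ℝ) (hp : ∀ t w : ℝ, p t w = -(ω'^2) / ρ t w + C) :
    ∀ t w : ℝ, deriv (fun s => u s w) t + u t w * deriv (u t) w
      = -(1 / ρ t w) * deriv (fun w' => p t w') w :=
  stmt_18_general ω' C G hG hwave z hz y hy x hx hinv u hu huv ρ hρ hρpos p hp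
end
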